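/- arXiv:2604.25807 — 3 statements merged into one kernel-verified Lean document; each statement's English description precedes it below -/
import Mathlib

section
/- Let n be even and 1 ≤ k ≤ n/2, and let D_B be the set of strictly increasing 2k-tuples r in [1,n] with r_{2k} = n. Define τ_B : D_B → D_B by τ_B(r)_j = n − r_{2k−j} for 1 ≤ j ≤ 2k−1 and τ_B(r)_{2k} = n. Then τ_B is well defined, is an involution on D_B, and for every r ∈ D_B, S(τ_B(r)) = S(r) and W(τ_B(r)) = n(S(r) + 1) − W(r). -/
open Finset

/-- Signature `S(r) = Σ_{j=1}^{2k} (−1)^{j+r_j}`. -/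
def SigI (k : ℕ) (r : ℕ → ℕ) : ℤ :=
  ∑ j ∈ Finset.Icc 1 (2 * k), (-1) ^ (j + r j)

/-- Weighted signature `W(r) = Σ_{j=1}^{2k} (−1)^{j+r_j} r_j`. -/
def WsigI (k : ℕ) (r : ℕ → ℕ) : ℤ :=
  ∑ j ∈ Finset.Icc 1 (2 * k), (-1) ^ (j + r j) * (r j : ℤ)

/-!
Write `p = 2k`. On the indices `1 ≤ j < p` the map `τ_B` is the reflection `j ↦ p - j`
composed with `x ↦ n - x`; it reverses order twice, so it preserves strict increase and is
an involution. Since `p + n` is even, `j + t_j` and `(p - j) + r_{p-j}` have the same parity,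
so reindexing by the reflection gives `S(t) = S(r)` and, expanding `t_j = n - r_{p-j}`,
`W(t) = n S(r) - W(r)` on the first `p - 1` indices. The last index contributes `1` to `S`
and `n` to `W` for both tuples.
-/

lemma sum_Icc_one_eq_sum_add_last {M : Type*} [AddCommMonoid M] {p : ℕ} (hp : 1 ≤ p)
    (f : ℕ → M) : ∑ j ∈ Icc 1 p, f j = ∑ j ∈ Icc 1 (p - 1), f j + f p := by
  obtain ⟨m, rfl⟩ := Nat.exists_eq_add_of_le' hp
  simpa using sum_Icc_succ_top (by omega) f

lemma sum_Icc_one_reflect {M : Type*} [AddCommMonoid M] (p : ℕ) (f : ℕ → M) :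
    ∑ j ∈ Icc 1 (p - 1), f (p - j) = ∑ j ∈ Icc 1 (p - 1), f j :=
  sum_nbij' (p - ·) (p - ·) (fun j hj => by simp only [mem_Icc] at hj ⊢; omega)
    (fun j hj => by simp only [mem_Icc] at hj ⊢; omega)
    (fun j hj => by simp only [mem_Icc] at hj; omega)
    (fun j hj => by simp only [mem_Icc] at hj; omega) fun _ _ => rfl

section Reflection

variable {n p : ℕ} {r t : ℕ → ℕ}
  (hrt : ∀ j ∈ Icc 1 (p - 1), t j + r (p - j) = n) (hpar : Even (p + n))
include hrt hpar

lemma neg_one_pow_add_reflect {j : ℕ} (hj : j ∈ Icc 1 (p - 1)) :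
    (-1 : ℤ) ^ (j + t j) = (-1) ^ (p - j + r (p - j)) := by
  apply neg_one_pow_congr
  rw [← Nat.even_add]
  convert hpar using 1
  have := hrt j hj
  rw [mem_Icc] at hj
  omega

lemma sum_neg_one_pow_reflect :
    ∑ j ∈ Icc 1 (p - 1), (-1 : ℤ) ^ (j + t j) =
      ∑ j ∈ Icc 1 (p - 1), (-1 : ℤ) ^ (j + r j) := by
  rw [← sum_Icc_one_reflect p (fun j => (-1 : ℤ) ^ (j + r j))]
  exact sum_congr rfl fun j hj => neg_one_pow_add_reflect hrt hpar hj

lemma sum_neg_one_pow_mul_reflect :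
    ∑ j ∈ Icc 1 (p - 1), (-1 : ℤ) ^ (j + t j) * t j =
      n * ∑ j ∈ Icc 1 (p - 1), (-1 : ℤ) ^ (j + r j) -
        ∑ j ∈ Icc 1 (p - 1), (-1 : ℤ) ^ (j + r j) * r j := by
  rw [mul_sum, ← sum_sub_distrib,
    ← sum_Icc_one_reflect p (fun j => (n : ℤ) * (-1) ^ (j + r j) - (-1) ^ (j + r j) * r j)]
  refine sum_congr rfl fun j hj => ?_
  have ht : (t j : ℤ) = n - r (p - j) := by rw [← hrt j hj]; push_cast; ring
  rw [neg_one_pow_add_reflect hrt hpar hj, ht]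
  ring

end Reflection

section LastIndex

variable {n k : ℕ} {r : ℕ → ℕ} (hk : 1 ≤ k) (hn : Even n) (hr : r (2 * k) = n)
include hk hn hr

lemma sigI_eq_sum_add_one :
    SigI k r = ∑ j ∈ Icc 1 (2 * k - 1), (-1 : ℤ) ^ (j + r j) + 1 := by
  rw [SigI, sum_Icc_one_eq_sum_add_last (by omega), hr, ((even_two_mul k).add hn).neg_one_pow]

lemma wsigI_eq_sum_add :
    WsigI k r = ∑ j ∈ Icc 1 (2 * k - 1), (-1 : ℤ) ^ (j + r j) * r j + n := by
  rw [WsigI, sum_Icc_one_eq_sum_add_last (by omega), hr, ((even_two_mul k).add hn).neg_one_pow,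
    one_mul]

end LastIndex

lemma reflect_lt_succ {n p : ℕ} {r t : ℕ → ℕ} (hr : StrictMonoOn r (Set.Icc 1 p))
    (hr1 : 1 ≤ r 1) (hrp : r p = n) (ht : ∀ j, 1 ≤ j → j ≤ p - 1 → t j = n - r (p - j))
    (htp : t p = n) {j : ℕ} (hj : 1 ≤ j) (hjp : j < p) : t j < t (j + 1) := by
  have hrn : r (p - j) ≤ n :=
    hrp ▸ hr.monotoneOn ⟨by omega, by omega⟩ ⟨by omega, le_rfl⟩ (by omega)
  rw [ht j hj (by omega)]
  rcases Nat.lt_or_ge (j + 1) p with h | h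
  · have := hr (a := p - (j + 1)) (b := p - j) ⟨by omega, by omega⟩ ⟨by omega, by omega⟩
      (by omega)
    rw [ht (j + 1) (by omega) (by omega)]
    omega
  · obtain rfl : p = j + 1 := by omega
    have := hr (a := 1) (b := j + 1) ⟨le_rfl, by omega⟩ ⟨by omega, le_rfl⟩ (by omega)
    rw [htp, Nat.add_sub_cancel_left]
    omega

theorem stmt13_general (n k : ℕ) (hne : Even n) (hk1 : 1 ≤ k)
    (r t : ℕ → ℕ)
    (hinc : ∀ j : ℕ, 1 ≤ j → j < 2 * k → r j < r (j + 1))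
    (hlb : 1 ≤ r 1) (hub : r (2 * k) = n)
    (ht : ∀ j : ℕ, 1 ≤ j → j ≤ 2 * k - 1 → t j = n - r (2 * k - j))
    (htlast : t (2 * k) = n) :
    ((∀ j : ℕ, 1 ≤ j → j < 2 * k → t j < t (j + 1)) ∧ 1 ≤ t 1 ∧ t (2 * k) = n) ∧
    (∀ j : ℕ, 1 ≤ j → j ≤ 2 * k - 1 → n - t (2 * k - j) = r j) ∧
    SigI k t = SigI k r ∧
    WsigI k t = n * (SigI k r + 1) - WsigI k r := by
  have hmono : StrictMonoOn r (Set.Icc 1 (2 * k)) :=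
    strictMonoOn_of_lt_add_one Set.ordConnected_Icc fun j _ hj hj1 => hinc j hj.1 (by
      have := hj1.2; omega)
  have hle : ∀ j ∈ Icc 1 (2 * k), r j ≤ n := fun j hj =>
    hub ▸ hmono.monotoneOn (by simpa using hj) ⟨by omega, le_rfl⟩ (mem_Icc.1 hj).2
  have hrt : ∀ j ∈ Icc 1 (2 * k - 1), t j + r (2 * k - j) = n := fun j hj => by
    rw [mem_Icc] at hj
    have := hle (2 * k - j) (mem_Icc.2 ⟨by omega, by omega⟩)
    rw [ht j hj.1 hj.2]
    omega
  have hpar : Even (2 * k + n) := (even_two_mul k).add hne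
  refine ⟨⟨fun j hj hjk => reflect_lt_succ hmono hlb hub ht htlast hj hjk, ?_, htlast⟩,
    ?_, ?_, ?_⟩
  · have := hinc (2 * k - 1) (by omega) (by omega)
    rw [Nat.sub_add_cancel (by omega), hub] at this
    rw [ht 1 le_rfl (by omega)]
    omega
  · intro j hj1 hj2
    have := hrt (2 * k - j) (mem_Icc.2 ⟨by omega, by omega⟩)
    rw [Nat.sub_sub_self (by omega)] at this
    omega
  · rw [sigI_eq_sum_add_one hk1 hne htlast, sigI_eq_sum_add_one hk1 hne hub,
      sum_neg_one_pow_reflect hrt hpar]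
  · rw [wsigI_eq_sum_add hk1 hne htlast, wsigI_eq_sum_add hk1 hne hub,
      sigI_eq_sum_add_one hk1 hne hub, sum_neg_one_pow_mul_reflect hrt hpar]
    ring

theorem stmt13 (n k : ℕ) (hne : Even n) (hk1 : 1 ≤ k) (hk2 : k ≤ n / 2)
    (r t : ℕ → ℕ)
    (hinc : ∀ j : ℕ, 1 ≤ j → j < 2 * k → r j < r (j + 1))
    (hlb : 1 ≤ r 1) (hub : r (2 * k) = n)
    (ht : ∀ j : ℕ, 1 ≤ j → j ≤ 2 * k - 1 → t j = n - r (2 * k - j))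
    (htlast : t (2 * k) = n) :
    ((∀ j : ℕ, 1 ≤ j → j < 2 * k → t j < t (j + 1)) ∧ 1 ≤ t 1 ∧ t (2 * k) = n) ∧
    (∀ j : ℕ, 1 ≤ j → j ≤ 2 * k - 1 → n - t (2 * k - j) = r j) ∧
    SigI k t = SigI k r ∧
    WsigI k t = n * (SigI k r + 1) - WsigI k r :=
  stmt13_general n k hne hk1 r t hinc hlb hub ht htlast
end

section
/- Let n ≥ 4 be even, let ω be a complex number with ω^n = 1 and |ω| = 1, and let 1 ≤ k ≤ n/2. For an even integer s, define A_{s,I} = Σ ω^{W(r)} over strictly increasing 2k-tuples r in [1,n] with S(r) = s and r_{2k} < n, and A_{s,B} = Σ ω^{W(r)} over those with S(r) = s and r_{2k} = n. Then (i) A_{s,I} = A_{−s,I}, (ii) A_{s,B} = (A_{s,B})^* (i.e., A_{s,B} is real), and consequently (iii) A_s^{(k)} + (A_{−s}^{(k)})^* is real, where A_s^{(k)} = A_{s,I} + A_{s,B}. -/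
open Complex Finset

/-- Signature `S(r) = Σ_j (−1)^{j+r_j}` for a `2k`-tuple encoded as `r : Fin (2k) → Fin n`,
with paper (1-based) values `r_j = (r j) + 1` at paper positions `j + 1`. -/
def Sig {N twok : ℕ} (r : Fin twok → Fin N) : ℤ :=
  ∑ j : Fin twok, (-1) ^ ((j : ℕ) + (r j : ℕ))

/-- Weighted signature `W(r) = Σ_j (−1)^{j+r_j} r_j`. -/
def Wsig {N twok : ℕ} (r : Fin twok → Fin N) : ℤ :=
  ∑ j : Fin twok, (-1) ^ ((j : ℕ) + (r j : ℕ)) * ((r j : ℕ) + 1)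

-- `A_s^{(k)} = Σ_{r : S(r) = s} ω^{W(r)}`, over all strictly increasing `2k`-tuples in `[1,n]`.
open Classical in
noncomputable def Aamp (n k : ℕ) (ω : ℂ) (s : ℤ) : ℂ :=
  ∑ r ∈ Finset.univ.filter
      (fun r : Fin (2 * k) → Fin n => StrictMono r ∧ Sig r = s),
    ω ^ Wsig r

-- `A_{s,I}`: the part of `A_s^{(k)}` coming from tuples with largest entry `< n`
-- (for strictly increasing tuples, `r_{2k} < n` iff every entry is `< n`).
open Classical in
noncomputable def AampI (n k : ℕ) (ω : ℂ) (s : ℤ) : ℂ :=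
  ∑ r ∈ Finset.univ.filter
      (fun r : Fin (2 * k) → Fin n =>
        StrictMono r ∧ Sig r = s ∧ ∀ i, (r i : ℕ) + 1 < n),
    ω ^ Wsig r

-- `A_{s,B}`: the part of `A_s^{(k)}` coming from tuples with largest entry `= n`
-- (for tuples with entries in `[1,n]`, `r_{2k} = n` iff some entry equals `n`).
open Classical in
noncomputable def AampB (n k : ℕ) (ω : ℂ) (s : ℤ) : ℂ :=
  ∑ r ∈ Finset.univ.filter
      (fun r : Fin (2 * k) → Fin n =>
        StrictMono r ∧ Sig r = s ∧ ∃ i, (r i : ℕ) + 1 = n),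
    ω ^ Wsig r

/-!
Reflecting both positions and values of a tuple in `[1, n-1]`, `r_j ↦ n - r_{M+1-j}`, multiplies
every sign `(-1)^(j + r_j)` by `(-1)^(M+n+1)` and turns `W` into `±(n S - W)`. For `M = 2k` and
`n` even this sends signature `s` to `-s` and changes `W` by a multiple of `n`, which `ω` does not
see; this gives (i). A tuple ending at `n` is instead reflected in its first `2k - 1` entries only:
the signature is kept and `W` becomes `-W` modulo `n`, so `ω^W` is conjugated; this gives (ii).
-/

open scoped ComplexConjugate

lemma neg_one_pow_congr_mod_two {a b : ℕ} (h : a % 2 = b % 2) : (-1 : ℤ) ^ a = (-1) ^ b := by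
  rw [neg_one_pow_eq_pow_mod_two, h, ← neg_one_pow_eq_pow_mod_two]

lemma zpow_add_natCast_mul_of_pow_eq_one {G₀ : Type*} [GroupWithZero G₀] {ω : G₀} {n : ℕ}
    (hω : ω ^ n = 1) (a b : ℤ) : ω ^ (a + n * b) = ω ^ a := by
  rcases eq_or_ne ω 0 with rfl | hω0
  · obtain rfl : n = 0 := by by_contra hn; simp [zero_pow hn] at hω
    simp
  · rw [zpow_add₀ hω0, zpow_mul, zpow_natCast, hω, one_zpow, mul_one]

lemma Complex.conj_zpow_of_norm_eq_one {ω : ℂ} (hω : ‖ω‖ = 1) (a : ℤ) :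
    conj (ω ^ a) = ω ^ (-a) := by
  rw [map_zpow₀, ← Complex.inv_eq_conj hω, inv_zpow, zpow_neg]

lemma Fin.strictMono_snoc {α : Type*} [Preorder α] {m : ℕ} {q : Fin m → α} {x : α}
    (hq : StrictMono q) (hx : ∀ i, q i < x) : StrictMono (Fin.snoc (α := fun _ ↦ α) q x) := by
  intro a b hab
  induction b using Fin.lastCases with
  | last =>
    obtain ⟨a, rfl⟩ := Fin.exists_castSucc_eq.mpr (Fin.ne_last_of_lt hab)
    simpa using hx a
  | cast b =>
    obtain ⟨a, rfl⟩ :=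
      Fin.exists_castSucc_eq.mpr (Fin.ne_last_of_lt (hab.trans (Fin.castSucc_lt_last b)))
    simpa using hq (Fin.castSucc_lt_castSucc_iff.mp hab)

section Reflection

variable {M n : ℕ}

/-- In the paper's 1-based values this is `r_j ↦ n - r_{M+1-j}`; it is only meaningful for tuples
with values in `[1, n-1]` (the value `n` is sent to the junk value `1`). -/
def reflect (r : Fin M → Fin n) : Fin M → Fin n :=
  fun j ↦ ⟨n - 2 - r j.rev, by have := (r j.rev).isLt; omega⟩

lemma reflect_val (r : Fin M → Fin n) (j : Fin M) : (reflect r j : ℕ) = n - 2 - r j.rev := rfl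

variable {r : Fin M → Fin n} (hr : ∀ i, (r i : ℕ) + 1 < n)
include hr

lemma reflect_add_one_lt (i : Fin M) : (reflect r i : ℕ) + 1 < n := by
  have := hr i.rev
  rw [reflect_val]
  omega

lemma reflect_reflect : reflect (reflect r) = r :=
  funext fun j ↦ Fin.ext <| by
    have := hr j
    rw [reflect_val, reflect_val, Fin.rev_rev]
    omega

lemma StrictMono.reflect (hmono : StrictMono r) : StrictMono (reflect r) := by
  intro a b hab
  have hlt := hmono (Fin.rev_lt_rev.mpr hab)
  have := hr a.rev
  rw [Fin.lt_def] at hlt ⊢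
  rw [reflect_val, reflect_val]
  omega

lemma sig_reflect : Sig (reflect r) = (-1) ^ (M + n + 1) * Sig r := by
  rw [Sig, Sig, mul_sum]
  refine Fintype.sum_equiv Fin.revPerm _ _ fun j ↦ ?_
  rw [Fin.revPerm_apply, ← pow_add, reflect_val]
  have := hr j.rev
  have := Fin.val_rev j
  have := j.isLt
  exact neg_one_pow_congr_mod_two (by omega)

lemma wsig_reflect : Wsig (reflect r) = (-1) ^ (M + n + 1) * (n * Sig r - Wsig r) := by
  have hsum : (n : ℤ) * Sig r - Wsig r =
      ∑ i : Fin M, (-1) ^ ((i : ℕ) + r i) * ((n : ℤ) - (r i + 1)) := by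
    rw [Sig, Wsig, mul_sum, ← sum_sub_distrib]
    exact sum_congr rfl fun i _ ↦ by ring
  rw [hsum, Wsig, mul_sum]
  refine Fintype.sum_equiv Fin.revPerm _ _ fun j ↦ ?_
  have := hr j.rev
  have := Fin.val_rev j
  have := j.isLt
  have hsign : (-1 : ℤ) ^ ((j : ℕ) + reflect r j) =
      (-1) ^ (M + n + 1) * (-1) ^ ((j.rev : ℕ) + r j.rev) := by
    rw [← pow_add, reflect_val]
    exact neg_one_pow_congr_mod_two (by omega)
  have hval : ((reflect r j : ℕ) : ℤ) + 1 = n - (r j.rev + 1) := by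
    rw [reflect_val]
    omega
  rw [Fin.revPerm_apply, hsign, add_assoc, hval]
  ring

end Reflection

section Boundary

variable {m n : ℕ}

lemma sig_eq_sig_init_add (r : Fin (m + 1) → Fin n) :
    Sig r = Sig (Fin.init r) + (-1) ^ (m + r (Fin.last m)) := by
  simp [Sig, Fin.sum_univ_castSucc, Fin.init]

lemma wsig_eq_wsig_init_add (r : Fin (m + 1) → Fin n) :
    Wsig r = Wsig (Fin.init r) + (-1) ^ (m + r (Fin.last m)) * (r (Fin.last m) + 1) := by
  simp [Wsig, Fin.sum_univ_castSucc, Fin.init]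

def reflectInit (r : Fin (m + 1) → Fin n) : Fin (m + 1) → Fin n :=
  Fin.snoc (reflect (Fin.init r)) (r (Fin.last m))

@[simp] lemma init_reflectInit (r : Fin (m + 1) → Fin n) :
    Fin.init (reflectInit r) = reflect (Fin.init r) :=
  Fin.init_snoc _ _

@[simp] lemma reflectInit_last (r : Fin (m + 1) → Fin n) :
    reflectInit r (Fin.last m) = r (Fin.last m) :=
  Fin.snoc_last _ _

lemma StrictMono.init_add_one_lt {r : Fin (m + 1) → Fin n} (hmono : StrictMono r)
    (hlast : (r (Fin.last m) : ℕ) + 1 = n) (i : Fin m) : (Fin.init r i : ℕ) + 1 < n := by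
  have := hmono (Fin.castSucc_lt_last i)
  rw [Fin.lt_def] at this
  change (r i.castSucc : ℕ) + 1 < n
  omega

lemma StrictMono.exists_add_one_eq_iff {r : Fin (m + 1) → Fin n} (hmono : StrictMono r) :
    (∃ i, (r i : ℕ) + 1 = n) ↔ (r (Fin.last m) : ℕ) + 1 = n := by
  refine ⟨fun ⟨i, hi⟩ ↦ ?_, fun h ↦ ⟨_, h⟩⟩
  have hle := Fin.le_def.mp (hmono.monotone (Fin.le_last i))
  have := (r (Fin.last m)).isLt
  omega

variable {r : Fin (m + 1) → Fin n} (hmono : StrictMono r) (hlast : (r (Fin.last m) : ℕ) + 1 = n)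
include hmono hlast

lemma reflectInit_reflectInit : reflectInit (reflectInit r) = r := by
  rw [reflectInit, init_reflectInit, reflectInit_last,
    reflect_reflect (hmono.init_add_one_lt hlast)]
  exact Fin.snoc_init_self r

lemma StrictMono.reflectInit : StrictMono (reflectInit r) := by
  refine Fin.strictMono_snoc ((hmono.comp Fin.strictMono_castSucc).reflect
    (hmono.init_add_one_lt hlast)) fun i ↦ ?_
  have := reflect_add_one_lt (hmono.init_add_one_lt hlast) i
  rw [Fin.lt_def]
  omega

lemma sig_reflectInit (hmn : Even (m + 1 + n)) : Sig (reflectInit r) = Sig r := by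
  have hsign : (-1 : ℤ) ^ (m + n + 1) = 1 := (add_right_comm m 1 n ▸ hmn).neg_one_pow
  rw [sig_eq_sig_init_add, sig_eq_sig_init_add r, init_reflectInit, reflectInit_last,
    sig_reflect (hmono.init_add_one_lt hlast), hsign, one_mul]

lemma wsig_reflectInit (hmn : Even (m + 1 + n)) :
    Wsig (reflectInit r) = -Wsig r + n * (Sig r + 1) := by
  have hsign : (-1 : ℤ) ^ (m + n + 1) = 1 := (add_right_comm m 1 n ▸ hmn).neg_one_pow
  have hlast_sign : (-1 : ℤ) ^ (m + r (Fin.last m)) = 1 := by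
    rw [neg_one_pow_congr_mod_two (b := m + 1 + n) (by omega)]; exact hmn.neg_one_pow
  have hlast_val : ((r (Fin.last m) : ℕ) : ℤ) + 1 = n := by omega
  rw [wsig_eq_wsig_init_add, wsig_eq_wsig_init_add r, sig_eq_sig_init_add r, init_reflectInit,
    reflectInit_last, wsig_reflect (hmono.init_add_one_lt hlast), hsign, hlast_sign, hlast_val]
  ring

end Boundary

section Sums

variable {M n : ℕ}

open Classical in
noncomputable def interiorTuples (M n : ℕ) (s : ℤ) : Finset (Fin M → Fin n) :=
  univ.filter fun r ↦ StrictMono r ∧ Sig r = s ∧ ∀ i, (r i : ℕ) + 1 < n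

open Classical in
noncomputable def boundaryTuples (M n : ℕ) (s : ℤ) : Finset (Fin M → Fin n) :=
  univ.filter fun r ↦ StrictMono r ∧ Sig r = s ∧ ∃ i, (r i : ℕ) + 1 = n

lemma reflect_mem_interiorTuples (hMn : Even (M + n)) {s : ℤ} {r : Fin M → Fin n}
    (hr : r ∈ interiorTuples M n s) : reflect r ∈ interiorTuples M n (-s) := by
  obtain ⟨hmono, hsig, hlt⟩ := by simpa [interiorTuples] using hr
  simp only [interiorTuples, mem_filter, mem_univ, true_and]
  refine ⟨hmono.reflect hlt, ?_, reflect_add_one_lt hlt⟩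
  rw [sig_reflect hlt, (hMn.add_one).neg_one_pow, hsig, neg_one_mul]

theorem sum_interiorTuples_neg (hMn : Even (M + n)) {ω : ℂ} (hω : ω ^ n = 1) (s : ℤ) :
    ∑ r ∈ interiorTuples M n (-s), ω ^ Wsig r =
      ∑ r ∈ interiorTuples M n s, ω ^ Wsig r := by
  have hlt {t : ℤ} {r : Fin M → Fin n} (hr : r ∈ interiorTuples M n t) :
      ∀ i, (r i : ℕ) + 1 < n := by
    simp only [interiorTuples, mem_filter] at hr
    exact hr.2.2.2
  refine sum_nbij' reflect reflect (fun r hr ↦ ?_) (fun r hr ↦ ?_)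
    (fun r hr ↦ reflect_reflect (hlt hr)) (fun r hr ↦ reflect_reflect (hlt hr)) fun r hr ↦ ?_
  · simpa using reflect_mem_interiorTuples hMn hr
  · exact reflect_mem_interiorTuples hMn hr
  · rw [wsig_reflect (hlt hr), (hMn.add_one).neg_one_pow,
      show -1 * (n * Sig r - Wsig r) = Wsig r + n * -Sig r by ring,
      zpow_add_natCast_mul_of_pow_eq_one hω]

lemma mem_boundaryTuples_succ {m : ℕ} {s : ℤ} {r : Fin (m + 1) → Fin n} :
    r ∈ boundaryTuples (m + 1) n s ↔
      StrictMono r ∧ Sig r = s ∧ (r (Fin.last m) : ℕ) + 1 = n := by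
  simp only [boundaryTuples, mem_filter, mem_univ, true_and]
  exact ⟨fun ⟨hmono, hsig, hex⟩ ↦ ⟨hmono, hsig, hmono.exists_add_one_eq_iff.mp hex⟩,
    fun ⟨hmono, hsig, hlast⟩ ↦ ⟨hmono, hsig, hmono.exists_add_one_eq_iff.mpr hlast⟩⟩

lemma reflectInit_mem_boundaryTuples {m : ℕ} (hmn : Even (m + 1 + n)) {s : ℤ}
    {r : Fin (m + 1) → Fin n} (hr : r ∈ boundaryTuples (m + 1) n s) :
    reflectInit r ∈ boundaryTuples (m + 1) n s := by
  obtain ⟨hmono, hsig, hlast⟩ := mem_boundaryTuples_succ.mp hr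
  exact mem_boundaryTuples_succ.mpr ⟨hmono.reflectInit hlast,
    (sig_reflectInit hmono hlast hmn).trans hsig, (reflectInit_last r).symm ▸ hlast⟩

theorem conj_sum_boundaryTuples (hMn : Even (M + n)) {ω : ℂ} (hωn : ω ^ n = 1)
    (hω : ‖ω‖ = 1) (s : ℤ) : conj (∑ r ∈ boundaryTuples M n s, ω ^ Wsig r) =
      ∑ r ∈ boundaryTuples M n s, ω ^ Wsig r := by
  cases M with
  | zero => simp [boundaryTuples]
  | succ m =>
    rw [map_sum]
    refine sum_nbij' reflectInit reflectInit (fun r hr ↦ reflectInit_mem_boundaryTuples hMn hr)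
      (fun r hr ↦ reflectInit_mem_boundaryTuples hMn hr) (fun r hr ↦ ?_) (fun r hr ↦ ?_)
      fun r hr ↦ ?_
    all_goals obtain ⟨hmono, hsig, hlast⟩ := mem_boundaryTuples_succ.mp hr
    · exact reflectInit_reflectInit hmono hlast
    · exact reflectInit_reflectInit hmono hlast
    · rw [Complex.conj_zpow_of_norm_eq_one hω, wsig_reflectInit hmono hlast hMn,
        zpow_add_natCast_mul_of_pow_eq_one hωn]

end Sums

lemma aamp_eq_aampI_add_aampB (n k : ℕ) (ω : ℂ) (s : ℤ) :
    Aamp n k ω s = AampI n k ω s + AampB n k ω s := by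
  classical
  rw [Aamp, AampI, AampB, ← sum_filter_add_sum_filter_not _ fun r ↦ ∀ i, (r i : ℕ) + 1 < n,
    filter_filter, filter_filter]
  congr 1 <;> refine sum_congr (filter_congr fun r _ ↦ ?_) fun _ _ ↦ rfl
  · exact and_assoc
  · rw [and_assoc, not_forall]
    refine and_congr_right' (and_congr_right' (exists_congr fun i ↦ ?_))
    have := (r i).isLt
    omega

theorem stmt14_general (n k : ℕ) (hne : Even n)
    (ω : ℂ) (hωn : ω ^ n = 1) (hωabs : ‖ω‖ = 1)
    (s : ℤ) :
    Aamp n k ω s = AampI n k ω s + AampB n k ω s ∧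
    AampI n k ω s = AampI n k ω (-s) ∧
    AampB n k ω s = (starRingEnd ℂ) (AampB n k ω s) ∧
    (Aamp n k ω s + (starRingEnd ℂ) (Aamp n k ω (-s))).im = 0 := by
  have hkn : Even (2 * k + n) := (even_two_mul k).add hne
  have hI (t : ℤ) : AampI n k ω t = AampI n k ω (-t) :=
    (sum_interiorTuples_neg hkn hωn t).symm
  have hB (t : ℤ) : AampB n k ω t = conj (AampB n k ω t) :=
    (conj_sum_boundaryTuples hkn hωn hωabs t).symm
  have hB_real (t : ℤ) : (AampB n k ω t).im = 0 := Complex.conj_eq_iff_im.mp (hB t).symm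
  refine ⟨aamp_eq_aampI_add_aampB n k ω s, hI s, hB s, ?_⟩
  simp only [aamp_eq_aampI_add_aampB, map_add, add_im, conj_im, hB_real, ← hI s]
  ring

theorem stmt14 (n k : ℕ) (hn4 : 4 ≤ n) (hne : Even n) (hk1 : 1 ≤ k) (hk2 : k ≤ n / 2)
    (ω : ℂ) (hωn : ω ^ n = 1) (hωabs : ‖ω‖ = 1)
    (s : ℤ) (hs : Even s) :
    Aamp n k ω s = AampI n k ω s + AampB n k ω s ∧
    AampI n k ω s = AampI n k ω (-s) ∧
    AampB n k ω s = (starRingEnd ℂ) (AampB n k ω s) ∧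
    (Aamp n k ω s + (starRingEnd ℂ) (Aamp n k ω (-s))).im = 0 :=
  stmt14_general n k hne ω hωn hωabs s
end

section
/- Let m ≥ 1 be odd, n = 4m + 2, N = 2m + 1, Φ = 2mπ/N, and for real x define ω^x = e^{iΦx/2}. Define β_j = (−1)^{j+1} j + N/2 for 1 ≤ j ≤ n, and let K_j be the 2×2 complex matrix with zero diagonal, (1,2)-entry ω^{β_j}, and (2,1)-entry ω^{−β_j}. Then for every complex number t, the ordered product P(t) = (I + tK_1)(I + tK_2)⋯(I + tK_n) equals (1 − t²)^N I. Consequently, the coefficient of t^{2k} in the (1,1)-entry of P(t) is (−1)^k C(N, k) for 0 ≤ k ≤ N. -/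
/-!
Each `K j` is an involution, and if `j + j'` is an odd multiple of `N` then `β j' - β j` is an
odd multiple of `N`, so `ω ^ β j' = -ω ^ β j` (this is where `m` odd enters) and `K j' = -K j`.
Hence the first `2m` factors satisfy `K (N - j) = -K j` and the last `2m + 2` satisfy
`K (3N - j) = -K j`. A product `(1 + t a₁) ⋯ (1 + t aₗ)(1 - t aₗ) ⋯ (1 - t a₁)` of involutions
telescopes from the middle via `(1 + t a)(1 - t a) = 1 - t²`, so the two blocks contribute
`(1 - t²) ^ m` and `(1 - t²) ^ (m + 1)`.
-/

open Complex Matrix Finset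

/-- Ordered product `P(t) = (I + tK_1)(I + tK_2)⋯(I + tK_n)`. -/
noncomputable def Pprod (n : ℕ) (K : ℕ → Matrix (Fin 2) (Fin 2) ℂ) (t : ℂ) :
    Matrix (Fin 2) (Fin 2) ℂ :=
  ((List.range n).map (fun j => 1 + t • K (j + 1))).prod

section Antipalindromic

variable {R A : Type*} [CommRing R] [Ring A] [Algebra R A]

theorem one_add_smul_mul_one_sub_smul (t : R) {a : A} (ha : a * a = 1) :
    (1 + t • a) * (1 - t • a) = algebraMap R A (1 - t ^ 2) := by
  rw [Algebra.algebraMap_eq_smul_one, sub_smul, one_smul, mul_sub, add_mul, add_mul,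
    smul_mul_smul, ha, pow_two]
  simp only [one_mul, mul_one]
  abel

theorem prod_range_one_add_smul_of_antipalindromic (t : R) (e : ℕ) (a : ℕ → A)
    (hsq : ∀ i < 2 * e, a i * a i = 1) (hanti : ∀ i < 2 * e, a (2 * e - 1 - i) = -a i) :
    ((List.range (2 * e)).map fun i => 1 + t • a i).prod = algebraMap R A ((1 - t ^ 2) ^ e) := by
  induction e generalizing a with
  | zero => simp
  | succ e ih =>
    have hinner := ih (fun i => a (i + 1)) (fun i hi => hsq _ (by omega)) fun i hi => by
      simpa [show 2 * e - 1 - i + 1 = 2 * (e + 1) - 1 - (i + 1) by omega] using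
        hanti (i + 1) (by omega)
    have hlast : a (2 * e + 1) = -a 0 := by
      simpa [show 2 * (e + 1) - 1 = 2 * e + 1 by omega] using hanti 0 (by omega)
    rw [show 2 * (e + 1) = 2 * e + 1 + 1 by ring, List.range_succ_eq_map, List.range_succ]
    simp only [List.map_cons, List.map_append, List.map_map, List.prod_cons, List.prod_append,
      List.map_nil, List.prod_nil, mul_one, Function.comp_def, hinner, hlast, smul_neg,
      ← sub_eq_add_neg]
    rw [Algebra.commutes, ← mul_assoc, one_add_smul_mul_one_sub_smul t (hsq 0 (by omega)),
      ← map_mul, ← pow_succ']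

end Antipalindromic

theorem Pprod_add (p q : ℕ) (K : ℕ → Matrix (Fin 2) (Fin 2) ℂ) (t : ℂ) :
    Pprod (p + q) K t = Pprod p K t * ((List.range q).map fun i => 1 + t • K (p + i + 1)).prod := by
  rw [Pprod, List.range_add, List.map_append, List.prod_append, List.map_map]
  rfl

theorem one_sub_sq_pow_eq_sum {R : Type*} [CommRing R] (t : R) (n : ℕ) :
    (1 - t ^ 2) ^ n = ∑ k ∈ range (n + 1), (-1 : R) ^ k * (n.choose k : R) * t ^ (2 * k) := by
  rw [sub_eq_add_neg, add_comm, add_pow]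
  refine sum_congr rfl fun k _ => ?_
  rw [one_pow, mul_one, neg_pow, ← pow_mul]
  ring

theorem neg_one_pow_succ_eq_neg_of_odd_add {R : Type*} [Ring R] {j j' : ℕ} (h : Odd (j + j')) :
    (-1 : R) ^ (j + 1) = -(-1) ^ (j' + 1) := by
  rcases Nat.even_or_odd j with hj | hj
  · have hj' : Odd j' := by grind
    simp [pow_succ, hj.neg_one_pow, hj'.neg_one_pow]
  · have hj' : Even j' := by grind
    simp [pow_succ, hj.neg_one_pow, hj'.neg_one_pow]

theorem antidiag_exp_mul_self (z : ℂ) :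
    !![0, exp z; exp (-z), 0] * !![0, exp z; exp (-z), 0] = (1 : Matrix (Fin 2) (Fin 2) ℂ) := by
  ext a b
  fin_cases a <;> fin_cases b <;> simp [← Complex.exp_add]

theorem antidiag_exp_eq_neg {z w : ℂ} (h : exp w = -exp z) :
    !![0, exp w; exp (-w), 0] = -!![0, exp z; exp (-z), 0] := by
  have h' : exp (-w) = -exp (-z) := by rw [Complex.exp_neg, Complex.exp_neg, h, inv_neg]
  ext a b
  fin_cases a <;> fin_cases b <;> simp [h, h']

theorem exp_add_int_mul_pi_mul_I_of_odd (z : ℂ) {k : ℤ} (hk : Odd k) :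
    exp (z + k * (Real.pi * I)) = -exp z := by
  rw [Complex.exp_add, Complex.exp_int_mul, Complex.exp_pi_mul_I, hk.neg_one_zpow, mul_neg_one]

theorem exp_I_mul_phase_shift {m N : ℕ} (hmodd : Odd m) (hN : N = 2 * m + 1) {Φ : ℝ}
    (hΦ : Φ = 2 * m * Real.pi / N) {x y : ℝ} {k : ℤ} (hk : Odd k) (hxy : y = x + k * N) :
    exp (I * Φ * y / 2) = -exp (I * Φ * x / 2) := by
  have hN0 : (N : ℂ) ≠ 0 := by norm_cast; omega
  have hphase : I * Φ * y / 2 = I * Φ * x / 2 + ((k * m : ℤ) : ℂ) * (Real.pi * I) := by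
    rw [hxy, hΦ]
    push_cast
    field_simp
  rw [hphase, exp_add_int_mul_pi_mul_I_of_odd _ (hk.mul (Int.odd_coe_nat m |>.mpr hmodd))]

theorem alternating_shift {N j j' r : ℕ} (hN : Odd N) (hr : Odd r) (hsum : j + j' = r * N) :
    (-1 : ℝ) ^ (j' + 1) * j' + N / 2 =
      (-1 : ℝ) ^ (j + 1) * j + N / 2 + (((-1) ^ (j' + 1) * r : ℤ) : ℝ) * N := by
  have hsign := neg_one_pow_succ_eq_neg_of_odd_add (R := ℝ) (hsum ▸ hr.mul hN)
  have hsum' : (j : ℝ) + j' = r * N := by exact_mod_cast hsum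
  push_cast
  rw [hsign]
  linear_combination (-1 : ℝ) ^ (j' + 1) * hsum'

theorem stmt18_general (m : ℕ) (hmodd : Odd m)
    (N : ℕ) (hN : N = 2 * m + 1) (Φ : ℝ) (hΦ : Φ = 2 * m * Real.pi / N)
    (β : ℕ → ℝ)
    (hβ : ∀ j : ℕ, 1 ≤ j → j ≤ 4 * m + 2 →
      β j = (-1 : ℝ) ^ (j + 1) * j + (N : ℝ) / 2)
    (K : ℕ → Matrix (Fin 2) (Fin 2) ℂ)
    (hK : ∀ j : ℕ, 1 ≤ j → j ≤ 4 * m + 2 →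
      K j = !![0, Complex.exp (Complex.I * Φ * β j / 2);
               Complex.exp (-(Complex.I * Φ * β j / 2)), 0]) :
    ∀ t : ℂ,
      Pprod (4 * m + 2) K t = ((1 - t ^ 2) ^ N) • (1 : Matrix (Fin 2) (Fin 2) ℂ) ∧
      (Pprod (4 * m + 2) K t) 0 0 =
        ∑ k ∈ Finset.range (N + 1),
          (-1 : ℂ) ^ k * (N.choose k : ℂ) * t ^ (2 * k) := by
  intro t
  have hsq : ∀ j, 1 ≤ j → j ≤ 4 * m + 2 → K j * K j = 1 := fun j h₁ h₂ =>
    (hK j h₁ h₂).symm ▸ antidiag_exp_mul_self _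
  have hrefl : ∀ j j' r, 1 ≤ j → j ≤ 4 * m + 2 → 1 ≤ j' → j' ≤ 4 * m + 2 → Odd r →
      j + j' = r * N → K j' = -K j := fun j j' r h₁ h₂ h₁' h₂' hr hsum => by
    rw [hK j h₁ h₂, hK j' h₁' h₂']
    have hk : Odd ((-1) ^ (j' + 1) * r : ℤ) := odd_neg_one.pow.mul (Int.odd_coe_nat r |>.mpr hr)
    refine antidiag_exp_eq_neg (exp_I_mul_phase_shift hmodd hN hΦ hk ?_)
    rw [hβ j h₁ h₂, hβ j' h₁' h₂']
    exact alternating_shift (hN ▸ odd_two_mul_add_one m) hr hsum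
  have hfirst := prod_range_one_add_smul_of_antipalindromic t m (fun i => K (i + 1))
    (fun i hi => hsq _ (by omega) (by omega))
    (fun i hi => hrefl _ _ 1 (by omega) (by omega) (by omega) (by omega) odd_one (by omega))
  have hsecond := prod_range_one_add_smul_of_antipalindromic t (m + 1) (fun i => K (2 * m + i + 1))
    (fun i hi => hsq _ (by omega) (by omega))
    (fun i hi => hrefl _ _ 3 (by omega) (by omega) (by omega) (by omega) (by decide) (by omega))
  have hP : Pprod (4 * m + 2) K t = ((1 - t ^ 2) ^ N) • (1 : Matrix (Fin 2) (Fin 2) ℂ) := by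
    rw [show 4 * m + 2 = 2 * m + 2 * (m + 1) by ring, Pprod_add, Pprod, hfirst, hsecond,
      ← map_mul, ← pow_add, show m + (m + 1) = N by omega, Algebra.algebraMap_eq_smul_one]
  refine ⟨hP, ?_⟩
  rw [hP, Matrix.smul_apply, one_apply_eq, smul_eq_mul, mul_one, one_sub_sq_pow_eq_sum]

theorem stmt18 (m : ℕ) (hm : 1 ≤ m) (hmodd : Odd m)
    (N : ℕ) (hN : N = 2 * m + 1) (Φ : ℝ) (hΦ : Φ = 2 * m * Real.pi / N)
    (β : ℕ → ℝ)
    (hβ : ∀ j : ℕ, 1 ≤ j → j ≤ 4 * m + 2 →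
      β j = (-1 : ℝ) ^ (j + 1) * j + (N : ℝ) / 2)
    (K : ℕ → Matrix (Fin 2) (Fin 2) ℂ)
    (hK : ∀ j : ℕ, 1 ≤ j → j ≤ 4 * m + 2 →
      K j = !![0, Complex.exp (Complex.I * Φ * β j / 2);
               Complex.exp (-(Complex.I * Φ * β j / 2)), 0]) :
    ∀ t : ℂ,
      Pprod (4 * m + 2) K t = ((1 - t ^ 2) ^ N) • (1 : Matrix (Fin 2) (Fin 2) ℂ) ∧
      (Pprod (4 * m + 2) K t) 0 0 =
        ∑ k ∈ Finset.range (N + 1),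
          (-1 : ℂ) ^ k * (N.choose k : ℂ) * t ^ (2 * k) :=
  stmt18_general m hmodd N hN Φ hΦ β hβ K hK
end
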